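/- arXiv:2512.07510 — 2 statements merged into one kernel-verified Lean document; each statement's English description precedes it below -/
import Mathlib

section
/- Let (λ_n)_{n ≥ 0} be a sequence of planar lines in ℝ² such that closure(L(λ_{n+1})) ⊆ L(λ_n) for all n. If the family {λ_n} is locally finite, then ⋂_{n ≥ 0} L(λ_n) = ∅. -/
open Set

/-- A planar line: a closed subset of the plane whose complement has exactly two
connected components `L` and `R`, each open with frontier equal to the line. -/
structure PlanarLine (lam L R : Set (ℝ × ℝ)) : Prop where
  closed : IsClosed lam
  openL : IsOpen L
  openR : IsOpen R
  nonemptyL : L.Nonempty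
  nonemptyR : R.Nonempty
  connL : IsConnected L
  connR : IsConnected R
  frontL : frontier L = lam
  frontR : frontier R = lam
  union : L ∪ R = lamᶜ
  disj : Disjoint L R

/-- A preconnected set meeting an open set `t` and the complement of its closure
meets the frontier of `t`. -/
lemma aux_frontier {α : Type*} [TopologicalSpace α] {s t : Set α}
    (hs : IsPreconnected s) (ht : IsOpen t) (h1 : (s ∩ t).Nonempty)
    (h2 : (s ∩ (closure t)ᶜ).Nonempty) : (s ∩ frontier t).Nonempty := by
  by_contra h
  rw [not_nonempty_iff_eq_empty] at h
  have hsub : s ⊆ t ∪ (closure t)ᶜ := by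
    intro x hx
    by_cases hxt : x ∈ t
    · exact Or.inl hxt
    by_cases hxc : x ∈ closure t
    · exact absurd (by
        have : x ∈ s ∩ frontier t := ⟨hx, hxc, by rwa [ht.interior_eq]⟩
        rw [h] at this; exact this) (notMem_empty x)
    · exact Or.inr hxc
  have := hs t (closure t)ᶜ ht isClosed_closure.isOpen_compl hsub h1 h2
  obtain ⟨x, -, hx1, hx2⟩ := this
  exact hx2 (subset_closure hx1)

/-- A locally finite nested sequence of planar lines has empty intersection of left sides. -/
theorem stmt_7 (lam L R : ℕ → Set (ℝ × ℝ))
    (hline : ∀ n, PlanarLine (lam n) (L n) (R n))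
    (hnest : ∀ n, closure (L (n + 1)) ⊆ L n)
    (hlf : ∀ K : Set (ℝ × ℝ), IsCompact K → {n : ℕ | (lam n ∩ K).Nonempty}.Finite) :
    ⋂ n : ℕ, L n = ∅ := by
  by_contra h
  rw [← Ne, ← nonempty_iff_ne_empty] at h
  obtain ⟨p, hp⟩ := h
  simp only [mem_iInter] at hp
  -- antitone: L (n+1) ⊆ L n via closure
  have hmono : ∀ n, closure (L (n + 1)) ⊆ closure (L 1) := by
    intro n
    induction n with
    | zero => exact subset_rfl
    | succ k ih => exact ((hnest (k + 1)).trans subset_closure).trans ih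
  -- pick q on lam 0
  have hfr0 : (lam 0).Nonempty := by
    rw [← (hline 0).frontL]
    rw [nonempty_frontier_iff]
    refine ⟨(hline 0).nonemptyL, ?_⟩
    intro huniv
    obtain ⟨r, hr⟩ := (hline 0).nonemptyR
    exact ((hline 0).disj.ne_of_mem (huniv ▸ mem_univ r) hr) rfl
  obtain ⟨q, hq⟩ := hfr0
  -- q ∉ closure (L 1) since closure (L 1) ⊆ L 0 ⊆ (lam 0)ᶜ
  have hL0 : L 0 ⊆ (lam 0)ᶜ := (hline 0).union ▸ subset_union_left
  have hq1 : q ∉ closure (L 1) := fun hc => hL0 (hnest 0 hc) hq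
  -- the segment from p to q
  set K := segment ℝ p q with hK
  have hKcompact : IsCompact K := by
    rw [hK, segment_eq_image]
    exact (isCompact_Icc.image (by continuity))
  have hKconn : IsPreconnected K := (convex_segment p q).isPreconnected
  have hfin := hlf K hKcompact
  refine Set.infinite_of_injective_forall_mem (s := {n | (lam n ∩ K).Nonempty})
    (f := fun k : ℕ => k + 1) (fun a b hab => by simpa using hab) ?_ hfin
  intro k
  -- segment meets lam (k+1)
  have hqk : q ∉ closure (L (k + 1)) := fun hc => hq1 (hmono k hc)
  have h1 : (K ∩ L (k + 1)).Nonempty := ⟨p, left_mem_segment ℝ p q, hp _⟩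
  have h2 : (K ∩ (closure (L (k + 1)))ᶜ).Nonempty := ⟨q, right_mem_segment ℝ p q, hqk⟩
  have := aux_frontier hKconn (hline (k + 1)).openL h1 h2
  rw [(hline (k + 1)).frontL] at this
  obtain ⟨x, hxK, hxlam⟩ := this
  exact ⟨x, hxlam, hxK⟩
end

section
/- Let σ and σ' be disjoint planar lines in ℝ². Then σ' is contained in exactly one of L(σ) or R(σ); moreover if σ' ⊆ L(σ), then closure(R(σ)) is contained in exactly one of L(σ') or R(σ'), so that one of the four nesting relations holds: R(σ) ⊆ L(σ'), R(σ) ⊆ R(σ'), with symmetric statements when σ' ⊆ R(σ). In particular the sides of two disjoint planar lines are always nested or disjoint. -/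
/-!
The plane is unicoherent: if it is the union of two closed connected sets, their intersection is
connected. Indeed, an integer-valued function on the intersection yields a circle-valued map on the
plane, and lifting it through `Circle.exp` (the plane is simply connected) forces the function to
be constant. Applied to the closures `L' ∪ σ'` and `R' ∪ σ'` of the sides of `σ'`, this shows that
`σ'` is connected; being disjoint from `σ`, it lies in one side of `σ`, say `L`. Then the connected
set `closure R = R ∪ σ` misses `σ'`, so it lies in one side of `σ'`.
-/

open Set

open Real

section Unicoherence

variable {X : Type*} [TopologicalSpace X]

theorem exists_circleExp_comp_eq [SimplyConnectedSpace X] [LocallyPathConnectedSpace X]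
    (f : C(X, Circle)) : ∃ g : C(X, ℝ), Circle.exp ∘ g = f := by
  obtain ⟨x₀⟩ := (inferInstance : Nonempty X)
  obtain ⟨e₀, he₀⟩ := Circle.exp_surjective (f x₀)
  obtain ⟨g, ⟨-, hg⟩, -⟩ := Circle.isCoveringMap_exp.existsUnique_continuousMap_lifts f x₀ e₀ he₀
  exact ⟨g, hg⟩

theorem IsPreconnected.constant_of_circleExp_eq_one {S : Set X} (hS : IsPreconnected S)
    {h : X → ℝ} (hc : ContinuousOn h S) (h1 : ∀ x ∈ S, Circle.exp (h x) = 1) {x y : X} (hx : x ∈ S)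
    (hy : y ∈ S) : h x = h y := by
  have hdiscrete : IsDiscrete (AddSubgroup.zmultiples (2 * π) : Set ℝ) :=
    isDiscrete_iff_discreteTopology.mpr
      (inferInstanceAs (DiscreteTopology (AddSubgroup.zmultiples (2 * π))))
  refine hS.constant_of_mapsTo hdiscrete hc (fun z hz => ?_) hx hy
  obtain ⟨n, hn⟩ := Circle.exp_eq_one.mp (h1 z hz)
  exact AddSubgroup.mem_zmultiples_iff.mpr ⟨n, by rw [hn, zsmul_eq_mul]⟩

/-- `exp (iπφ)` on `A` and `exp (-iπφ)` on `B` glue to a circle-valued map; its real lift `g`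
makes `g - πφ` constant on `A` and `g + πφ` constant on `B`. -/
theorem IsPreconnected.inter_constant_of_union_eq_univ [SimplyConnectedSpace X]
    [LocallyPathConnectedSpace X] {A B : Set X} (hA : IsPreconnected A) (hB : IsPreconnected B)
    (hAc : IsClosed A) (hBc : IsClosed B) (hAB : A ∪ B = univ) (φ : C(X, ℝ))
    (hφ : ∀ x ∈ A ∩ B, ∃ n : ℤ, φ x = n) {x y : X} (hx : x ∈ A ∩ B) (hy : y ∈ A ∩ B) :
    φ x = φ y := by
  classical
  set ψ : X → Circle := fun z => Circle.exp (π * φ z)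
  have hψ : Continuous ψ := Circle.exp.continuous.comp (continuous_const.mul φ.continuous)
  have hglue : ∀ z ∈ A ∩ B, ψ z = (ψ z)⁻¹ := by
    rintro z hz
    obtain ⟨n, hn⟩ := hφ z hz
    rw [eq_inv_iff_mul_eq_one, ← Circle.exp_add, hn, ← Circle.exp_int_mul_two_pi n]
    congr 1
    ring
  have hf : Continuous (A.piecewise ψ ψ⁻¹) := by
    rw [← continuousOn_univ, ← hAB]
    refine ContinuousOn.union_of_isClosed ?_ ?_ hAc hBc
    · exact hψ.continuousOn.congr fun z hz => piecewise_eq_of_mem _ _ _ hz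
    · refine hψ.inv.continuousOn.congr fun z hz => ?_
      by_cases hzA : z ∈ A
      · exact (piecewise_eq_of_mem _ _ _ hzA).trans (hglue z ⟨hzA, hz⟩)
      · exact piecewise_eq_of_notMem _ _ _ hzA
  obtain ⟨g, hg⟩ := exists_circleExp_comp_eq ⟨_, hf⟩
  replace hg z : Circle.exp (g z) = A.piecewise ψ ψ⁻¹ z := congrFun hg z
  have hgA : ∀ z ∈ A, Circle.exp (g z - π * φ z) = 1 := fun z hz => by
    rw [Circle.exp_sub, div_eq_one, hg]
    exact piecewise_eq_of_mem _ _ _ hz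
  have hgB : ∀ z ∈ B, Circle.exp (g z + π * φ z) = 1 := fun z hz => by
    rw [Circle.exp_add, mul_eq_one_iff_eq_inv, hg]
    by_cases hzA : z ∈ A
    · exact (piecewise_eq_of_mem _ _ _ hzA).trans (hglue z ⟨hzA, hz⟩)
    · exact piecewise_eq_of_notMem _ _ _ hzA
  have hA' := hA.constant_of_circleExp_eq_one (h := fun z => g z - π * φ z)
    (g.continuous.sub (continuous_const.mul φ.continuous)).continuousOn hgA hx.1 hy.1
  have hB' := hB.constant_of_circleExp_eq_one (h := fun z => g z + π * φ z)
    (g.continuous.add (continuous_const.mul φ.continuous)).continuousOn hgB hx.2 hy.2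
  have h2π : 2 * π * φ x = 2 * π * φ y := by linarith
  exact mul_left_cancel₀ (by positivity) h2π

theorem IsPreconnected.inter_of_union_eq_univ [NormalSpace X] [SimplyConnectedSpace X]
    [LocallyPathConnectedSpace X] {A B : Set X} (hA : IsPreconnected A) (hB : IsPreconnected B)
    (hAc : IsClosed A) (hBc : IsClosed B) (hAB : A ∪ B = univ) : IsPreconnected (A ∩ B) := by
  rw [isPreconnected_closed_iff]
  rintro P Q hP hQ hPQ ⟨p, hp, hpP⟩ ⟨q, hq, hqQ⟩
  by_contra hempty
  have hdisj : Disjoint (A ∩ B ∩ P) (A ∩ B ∩ Q) := by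
    rw [disjoint_iff_inter_eq_empty, ← not_nonempty_iff_eq_empty]
    rwa [inter_inter_distrib_left] at hempty
  obtain ⟨φ, hφP, hφQ, -⟩ := exists_continuous_zero_one_of_isClosed
    ((hAc.inter hBc).inter hP) ((hAc.inter hBc).inter hQ) hdisj
  have hφ : ∀ x ∈ A ∩ B, ∃ n : ℤ, φ x = n := by
    intro x hx
    rcases hPQ hx with hxP | hxQ
    · exact ⟨0, by simpa using hφP ⟨hx, hxP⟩⟩
    · exact ⟨1, by simpa using hφQ ⟨hx, hxQ⟩⟩
  have := hA.inter_constant_of_union_eq_univ hB hAc hBc hAB φ hφ hp hq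
  rw [hφP ⟨hp, hpP⟩, hφQ ⟨hq, hqQ⟩] at this
  exact zero_ne_one this

theorem IsConnected.xor_subset_of_subset_union {C U V : Set X} (hC : IsConnected C)
    (hU : IsOpen U) (hV : IsOpen V) (hUV : Disjoint U V) (hCUV : C ⊆ U ∪ V) :
    Xor (C ⊆ U) (C ⊆ V) := by
  obtain ⟨x, hx⟩ := hC.nonempty
  refine (xor_iff_or_and_not_and _ _).mpr ⟨hC.isPreconnected.subset_or_subset hU hV hUV hCUV, ?_⟩
  exact fun h => hUV.ne_of_mem (h.1 hx) (h.2 hx) rfl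

end Unicoherence

namespace PlanarLine

variable {s L R : Set (ℝ × ℝ)}

theorem symm (h : PlanarLine s L R) : PlanarLine s R L :=
  ⟨h.closed, h.openR, h.openL, h.nonemptyR, h.nonemptyL, h.connR, h.connL, h.frontR, h.frontL,
    union_comm L R ▸ h.union, h.disj.symm⟩

theorem closure_left (h : PlanarLine s L R) : closure L = L ∪ s := by
  rw [closure_eq_interior_union_frontier, h.openL.interior_eq, h.frontL]

theorem closure_left_union_closure_right (h : PlanarLine s L R) :
    closure L ∪ closure R = univ := by
  rw [h.closure_left, h.symm.closure_left, union_union_union_comm, union_self, h.union,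
    compl_union_self]

theorem closure_left_inter_closure_right (h : PlanarLine s L R) :
    closure L ∩ closure R = s := by
  rw [h.closure_left, h.symm.closure_left, ← inter_union_distrib_right, h.disj.inter_eq,
    empty_union]

theorem nonempty (h : PlanarLine s L R) : s.Nonempty := by
  rw [nonempty_iff_ne_empty, ← h.frontL]
  intro hL
  have hLuniv := (isClopen_iff_frontier_eq_empty.mpr hL).eq_univ h.nonemptyL
  obtain ⟨x, hx⟩ := h.nonemptyR
  exact h.disj.ne_of_mem (hLuniv ▸ mem_univ x) hx rfl

theorem isConnected (h : PlanarLine s L R) : IsConnected s := by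
  refine ⟨h.nonempty, ?_⟩
  rw [← h.closure_left_inter_closure_right]
  exact h.connL.isPreconnected.closure.inter_of_union_eq_univ h.connR.isPreconnected.closure
    isClosed_closure isClosed_closure h.closure_left_union_closure_right

theorem xor_subset_of_disjoint (h : PlanarLine s L R) {C : Set (ℝ × ℝ)} (hC : IsConnected C)
    (hCs : Disjoint C s) : Xor (C ⊆ L) (C ⊆ R) :=
  hC.xor_subset_of_subset_union h.openL h.openR h.disj (h.union ▸ hCs.subset_compl_right)

end PlanarLine

theorem stmt_12_general (s L R s' L' R' : Set (ℝ × ℝ))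
    (hline : PlanarLine s L R) (hline' : PlanarLine s' L' R')
    (hdisj : Disjoint s s') :
    Xor' (s' ⊆ L) (s' ⊆ R) ∧
    (s' ⊆ L → Xor' (closure R ⊆ L') (closure R ⊆ R')) ∧
    (s' ⊆ R → Xor' (closure L ⊆ L') (closure L ⊆ R')) := by
  have hnest : ∀ {L R : Set (ℝ × ℝ)}, PlanarLine s L R → s' ⊆ L →
      Xor (closure R ⊆ L') (closure R ⊆ R') := fun h hL =>
    hline'.xor_subset_of_disjoint h.connR.closure <| by
      rw [h.symm.closure_left]
      exact disjoint_union_left.mpr ⟨h.disj.symm.mono_right hL, hdisj⟩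
  exact ⟨hline.xor_subset_of_disjoint hline'.isConnected hdisj.symm, hnest hline, hnest hline.symm⟩

/-- The sides of two disjoint planar lines are nested: σ' lies in exactly one side of σ,
and the closure of the opposite side of σ lies in exactly one side of σ'. -/
theorem stmt_12 (s L R s' L' R' : Set (ℝ × ℝ))
    (hline : PlanarLine s L R) (hline' : PlanarLine s' L' R')
    (hclosL : IsConnected (closure L)) (hclosR : IsConnected (closure R))
    (hdisj : Disjoint s s') :
    Xor' (s' ⊆ L) (s' ⊆ R) ∧
    (s' ⊆ L → Xor' (closure R ⊆ L') (closure R ⊆ R')) ∧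
    (s' ⊆ R → Xor' (closure L ⊆ L') (closure L ⊆ R')) :=
  stmt_12_general s L R s' L' R' hline hline' hdisj
end
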